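/- Let n = k² be a perfect square with n > 9, and let γ be an integer with 1 ≤ γ ≤ √n − 1; set α_γ := γ/(1 + γ). In the lollipop graph L_n, the maximum density over subsets attaining fairness level α_γ equals (√n − 1 + 2γ)/(1 + γ), and consequently PoF(L_n, α_γ) = α_γ · (1 − 2/(√n − 1)). -/

import Mathlib

open Finset

/-- Number of edges of `G` with both endpoints in `S`. -/
def edgesIn {V : Type*} [Fintype V] [DecidableEq V] (G : SimpleGraph V)
    [DecidableRel G.Adj] (S : Finset V) : ℕ :=
  (G.edgeFinset.filter (fun e => ∀ v ∈ e, v ∈ S)).card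

/-- Density `ρ(S) = 2 e(S) / |S|` of the subgraph induced by `S`. -/
noncomputable def rho {V : Type*} [Fintype V] [DecidableEq V] (G : SimpleGraph V)
    [DecidableRel G.Adj] (S : Finset V) : ℝ :=
  2 * (edgesIn G S : ℝ) / S.card

/-- Fairness regularizer `r1(S) = |S ∩ Sp| / |S|`. -/
noncomputable def r1 {V : Type*} [DecidableEq V] (Sp S : Finset V) : ℝ :=
  ((S ∩ Sp).card : ℝ) / S.card

/-- The lollipop graph `L_n` on `n = k²` vertices: vertices `0, …, k-1` form a
clique (the unprotected vertices), vertices `k, …, k²-1` form a path (the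
protected vertices), and one endpoint of the path (vertex `k`) is joined to
one vertex of the clique (vertex `k-1`). -/
def lollipop (k : ℕ) : SimpleGraph (Fin (k * k)) where
  Adj u v := u ≠ v ∧ ((u.val < k ∧ v.val < k) ∨
      (u.val + 1 = v.val ∧ k ≤ v.val) ∨ (v.val + 1 = u.val ∧ k ≤ u.val))
  symm := by
    constructor
    intro u v h
    refine ⟨Ne.symm h.1, ?_⟩
    rcases h.2 with h | h | h
    · exact Or.inl ⟨h.2, h.1⟩
    · exact Or.inr (Or.inr h)
    · exact Or.inr (Or.inl h)
  loopless := by constructor; intro v h; exact h.1 rfl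

instance lollipopDecAdj (k : ℕ) : DecidableRel (lollipop k).Adj :=
  fun _ _ => inferInstanceAs (Decidable (_ ∧ _))

/-- The protected subset of the lollipop graph: the vertices of the path. -/
def lollipopProtected (k : ℕ) : Finset (Fin (k * k)) :=
  Finset.univ.filter (fun v => k ≤ v.val)

/-- The vertex set of the clique `C_√n` in the lollipop graph. -/
def lollipopClique (k : ℕ) : Finset (Fin (k * k)) :=
  Finset.univ.filter (fun v => v.val < k)

/-- Density of the densest subgraph: `ρ*_G = max_{∅ ≠ S ⊆ V} ρ(S)`. -/
noncomputable def rhoStar {V : Type*} [Fintype V] [DecidableEq V] (G : SimpleGraph V)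
    [DecidableRel G.Adj] : ℝ :=
  sSup {x : ℝ | ∃ S : Finset V, S.Nonempty ∧ rho G S = x}

/-- Density of the densest subgraph at fairness level `α`:
`ρ*_G(α) = max {ρ(S) : ∅ ≠ S ⊆ V, r1(S) = α}`. -/
noncomputable def rhoStarAlpha {V : Type*} [Fintype V] [DecidableEq V] (G : SimpleGraph V)
    [DecidableRel G.Adj] (Sp : Finset V) (α : ℝ) : ℝ :=
  sSup {x : ℝ | ∃ S : Finset V, S.Nonempty ∧ r1 Sp S = α ∧ rho G S = x}

/-- Price of fairness `PoF(G, α) = 1 - ρ*_G(α) / ρ*_G`. -/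
noncomputable def PoF {V : Type*} [Fintype V] [DecidableEq V] (G : SimpleGraph V)
    [DecidableRel G.Adj] (Sp : Finset V) (α : ℝ) : ℝ :=
  1 - rhoStarAlpha G Sp α / rhoStar G

/-!
Inside any vertex set `S`, an edge of the lollipop graph is either a clique edge or a path edge
`{v - 1, v}` with `v ∈ S` protected. Hence, with `a = |S ∩ C| ≤ k` and `b = |S ∩ Sp|`,
`2 e(S) ≤ a (a - 1) + 2 b`, with equality for every initial segment of the vertex order.
Without constraint this gives `2 e(S) ≤ (k - 1)(a + b)` as soon as `k ≥ 3`, so `ρ* = k - 1`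
(the clique). At fairness level `γ / (1 + γ)` we have `b = γ a`, so
`ρ(S) ≤ (a - 1 + 2γ) / (1 + γ) ≤ (k - 1 + 2γ) / (1 + γ)`, attained by the first
`k (1 + γ)` vertices.
-/

lemma edgesIn_eq_card_filter_mem_sym2 {V : Type*} [Fintype V] [DecidableEq V]
    (G : SimpleGraph V) [DecidableRel G.Adj] (S : Finset V) :
    edgesIn G S = #{e ∈ G.edgeFinset | e ∈ S.sym2} := by
  simp only [edgesIn, mem_sym2_iff]

section

variable {k : ℕ}

/-- Truncated `v - 1`; only meaningful for protected `v`, where `v ≥ k ≥ 1`. -/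
def lollipopPred (v : Fin (k * k)) : Fin (k * k) :=
  ⟨v - 1, (Nat.sub_le _ _).trans_lt v.isLt⟩

def lollipopPathEdge (v : Fin (k * k)) : Sym2 (Fin (k * k)) :=
  s(lollipopPred v, v)

lemma lollipop_adj {u v : Fin (k * k)} :
    (lollipop k).Adj u v ↔ u ≠ v ∧ ((u.val < k ∧ v.val < k) ∨
      (u.val + 1 = v.val ∧ k ≤ v.val) ∨ (v.val + 1 = u.val ∧ k ≤ u.val)) := Iff.rfl

lemma lollipopPred_eq_iff {u v : Fin (k * k)} (hv : k ≤ v.val) :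
    lollipopPred v = u ↔ u.val + 1 = v.val := by
  have := Nat.pos_of_mul_pos_left v.pos
  simp only [lollipopPred, Fin.ext_iff]
  omega

lemma filter_edgeFinset_lollipop (S : Finset (Fin (k * k))) :
    {e ∈ (lollipop k).edgeFinset | e ∈ S.sym2} =
      (S ∩ lollipopClique k).offDiag.image Sym2.mk.uncurry ∪
        {v ∈ S ∩ lollipopProtected k | lollipopPred v ∈ S}.image lollipopPathEdge := by
  ext e
  induction e using Sym2.ind with
  | _ x y =>
    simp only [mem_filter, mem_sym2_iff, SimpleGraph.mem_edgeFinset, SimpleGraph.mem_edgeSet,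
      Sym2.mem_iff, forall_eq_or_imp, forall_eq, mem_union, mem_image, mem_offDiag, mem_inter,
      lollipopClique, lollipopProtected, mem_univ, true_and, Prod.exists,
      Function.uncurry_apply_pair, lollipopPathEdge, Sym2.eq_iff, lollipop_adj]
    constructor
    · rintro ⟨⟨hne, ⟨hx, hy⟩ | ⟨hxy, hy⟩ | ⟨hyx, hx⟩⟩, hxS, hyS⟩
      · exact Or.inl ⟨x, y, ⟨⟨hxS, hx⟩, ⟨hyS, hy⟩, hne⟩, Or.inl ⟨rfl, rfl⟩⟩
      · have hpred := (lollipopPred_eq_iff hy).2 hxy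
        exact Or.inr ⟨y, ⟨⟨hyS, hy⟩, hpred ▸ hxS⟩, Or.inl ⟨hpred, rfl⟩⟩
      · have hpred := (lollipopPred_eq_iff hx).2 hyx
        exact Or.inr ⟨x, ⟨⟨hxS, hx⟩, hpred ▸ hyS⟩, Or.inr ⟨hpred, rfl⟩⟩
    · rintro (⟨a, b, ⟨⟨haS, ha⟩, ⟨hbS, hb⟩, hab⟩, ⟨rfl, rfl⟩ | ⟨rfl, rfl⟩⟩
        | ⟨v, ⟨⟨hvS, hv⟩, hpS⟩, ⟨rfl, rfl⟩ | ⟨rfl, rfl⟩⟩)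
      · exact ⟨⟨hab, Or.inl ⟨ha, hb⟩⟩, haS, hbS⟩
      · exact ⟨⟨Ne.symm hab, Or.inl ⟨hb, ha⟩⟩, hbS, haS⟩
      · have hpred := (lollipopPred_eq_iff (u := lollipopPred v) hv).1 rfl
        exact ⟨⟨fun h => by omega, Or.inr (Or.inl ⟨hpred, hv⟩)⟩, hpS, hvS⟩
      · have hpred := (lollipopPred_eq_iff (u := lollipopPred v) hv).1 rfl
        exact ⟨⟨fun h => by omega, Or.inr (Or.inr ⟨hpred, hv⟩)⟩, hvS, hpS⟩

lemma lollipopPathEdge_injective : Function.Injective (lollipopPathEdge (k := k)) := by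
  intro v w h
  rcases Sym2.eq_iff.1 h with ⟨-, h⟩ | ⟨h₁, h₂⟩
  · exact h
  · simp only [lollipopPred, Fin.ext_iff] at h₁ h₂
    omega

lemma edgesIn_lollipop (S : Finset (Fin (k * k))) :
    edgesIn (lollipop k) S =
      (#(S ∩ lollipopClique k)).choose 2 +
        #{v ∈ S ∩ lollipopProtected k | lollipopPred v ∈ S} := by
  rw [edgesIn_eq_card_filter_mem_sym2, filter_edgeFinset_lollipop, card_union_of_disjoint,
    Sym2.card_image_offDiag, card_image_of_injective _ lollipopPathEdge_injective]
  simp only [disjoint_left, mem_image, mem_offDiag, mem_filter, mem_inter, lollipopClique,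
    lollipopProtected, lollipopPathEdge, mem_univ, true_and, Prod.exists, not_exists, not_and]
  rintro _ ⟨a, b, ⟨⟨-, ha⟩, ⟨-, hb⟩, -⟩, rfl⟩ v ⟨⟨-, hv⟩, -⟩ h
  rcases Sym2.eq_iff.1 h with ⟨-, rfl⟩ | ⟨-, rfl⟩ <;> omega

lemma card_inter_lollipopClique_add_card_inter_lollipopProtected (S : Finset (Fin (k * k))) :
    #(S ∩ lollipopClique k) + #(S ∩ lollipopProtected k) = #S := by
  simpa [lollipopClique, lollipopProtected, Finset.inter_filter, not_lt] using
    card_filter_add_card_filter_not (s := S) (fun v : Fin (k * k) => v.val < k)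

lemma card_lollipopClique : #(lollipopClique k) = k := by
  rw [lollipopClique, Fin.card_filter_val_lt, min_eq_right (Nat.le_mul_self k)]

lemma card_inter_lollipopClique_le (S : Finset (Fin (k * k))) : #(S ∩ lollipopClique k) ≤ k :=
  (card_le_card inter_subset_right).trans_eq card_lollipopClique

lemma two_mul_edgesIn_lollipop_le (S : Finset (Fin (k * k))) :
    2 * (edgesIn (lollipop k) S : ℝ) ≤
      #(S ∩ lollipopClique k) * (#(S ∩ lollipopClique k) - 1 : ℝ) +
        2 * #(S ∩ lollipopProtected k) := by
  have hpath : (#{v ∈ S ∩ lollipopProtected k | lollipopPred v ∈ S} : ℝ) ≤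
      #(S ∩ lollipopProtected k) := by
    exact_mod_cast card_filter_le _ _
  rw [edgesIn_lollipop]
  push_cast
  rw [Nat.cast_choose_two]
  linarith

def lollipopPrefix (k m : ℕ) : Finset (Fin (k * k)) := {v | v.val < m}

lemma card_lollipopPrefix {m : ℕ} (hm : m ≤ k * k) : #(lollipopPrefix k m) = m := by
  rw [lollipopPrefix, Fin.card_filter_val_lt, min_eq_right hm]

lemma lollipopPrefix_inter_lollipopClique {m : ℕ} (hkm : k ≤ m) :
    lollipopPrefix k m ∩ lollipopClique k = lollipopClique k := by
  refine inter_eq_right.2 fun v hv => ?_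
  simp only [lollipopPrefix, lollipopClique, mem_filter, mem_univ, true_and] at hv ⊢
  omega

lemma card_lollipopPrefix_inter_lollipopProtected {m : ℕ} (hkm : k ≤ m) (hm : m ≤ k * k) :
    #(lollipopPrefix k m ∩ lollipopProtected k) = m - k := by
  have := card_inter_lollipopClique_add_card_inter_lollipopProtected (lollipopPrefix k m)
  rw [lollipopPrefix_inter_lollipopClique hkm, card_lollipopClique, card_lollipopPrefix hm] at this
  omega

lemma edgesIn_lollipopPrefix {m : ℕ} (hkm : k ≤ m) (hm : m ≤ k * k) :
    edgesIn (lollipop k) (lollipopPrefix k m) = k.choose 2 + (m - k) := by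
  have hpath : {v ∈ lollipopPrefix k m ∩ lollipopProtected k |
      lollipopPred v ∈ lollipopPrefix k m} = lollipopPrefix k m ∩ lollipopProtected k := by
    refine filter_true_of_mem fun v hv => ?_
    simp only [lollipopPrefix, lollipopPred, mem_inter, mem_filter, mem_univ, true_and] at hv ⊢
    omega
  rw [edgesIn_lollipop, hpath, lollipopPrefix_inter_lollipopClique hkm, card_lollipopClique,
    card_lollipopPrefix_inter_lollipopProtected hkm hm]

lemma rho_lollipopPrefix {m : ℕ} (hkm : k ≤ m) (hm : m ≤ k * k) :
    rho (lollipop k) (lollipopPrefix k m) = (k * (k - 1) + 2 * (m - k)) / m := by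
  rw [rho, edgesIn_lollipopPrefix hkm hm, card_lollipopPrefix hm]
  push_cast [Nat.cast_sub hkm, Nat.cast_choose_two]
  ring

lemma r1_lollipopPrefix {m : ℕ} (hkm : k ≤ m) (hm : m ≤ k * k) :
    r1 (lollipopProtected k) (lollipopPrefix k m) = (m - k) / m := by
  rw [r1, card_lollipopPrefix_inter_lollipopProtected hkm hm, card_lollipopPrefix hm,
    Nat.cast_sub hkm]

lemma isGreatest_rho_lollipop (hk : 3 ≤ k) :
    IsGreatest {x | ∃ S, S.Nonempty ∧ rho (lollipop k) S = x} ((k : ℝ) - 1) := by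
  refine ⟨⟨lollipopPrefix k k, ?_, ?_⟩, ?_⟩
  · rw [← card_pos, card_lollipopPrefix (Nat.le_mul_self k)]
    omega
  · rw [rho_lollipopPrefix le_rfl (Nat.le_mul_self k)]
    field_simp
    ring
  · rintro _ ⟨S, hS, rfl⟩
    have hsplit := card_inter_lollipopClique_add_card_inter_lollipopProtected S
    have hclique : (#(S ∩ lollipopClique k) : ℝ) ≤ k := by
      exact_mod_cast card_inter_lollipopClique_le S
    have hk' : (3 : ℝ) ≤ k := by exact_mod_cast hk
    have hedges := two_mul_edgesIn_lollipop_le S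
    rw [rho, div_le_iff₀ (by exact_mod_cast card_pos.2 hS), ← hsplit]
    push_cast
    nlinarith [(#(S ∩ lollipopClique k)).cast_nonneg (α := ℝ),
      (#(S ∩ lollipopProtected k)).cast_nonneg (α := ℝ)]

lemma isGreatest_rho_lollipop_fair (hk : 0 < k) {γ : ℕ} (hγ : γ ≤ k - 1) :
    IsGreatest {x | ∃ S, S.Nonempty ∧ r1 (lollipopProtected k) S = γ / (1 + γ) ∧
      rho (lollipop k) S = x} (((k : ℝ) - 1 + 2 * γ) / (1 + γ)) := by
  have hkm : k ≤ k * (1 + γ) := Nat.le_mul_of_pos_right k (by omega)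
  have hm : k * (1 + γ) ≤ k * k := Nat.mul_le_mul_left k (by omega)
  refine ⟨⟨lollipopPrefix k (k * (1 + γ)), ?_, ?_, ?_⟩, ?_⟩
  · rw [← card_pos, card_lollipopPrefix hm]
    positivity
  · rw [r1_lollipopPrefix hkm hm]
    push_cast
    field_simp
    ring
  · rw [rho_lollipopPrefix hkm hm]
    push_cast
    field_simp
    ring
  · rintro _ ⟨S, hS, hfair, rfl⟩
    have hcard : (#S : ℝ) = #(S ∩ lollipopClique k) + #(S ∩ lollipopProtected k) := by
      exact_mod_cast (card_inter_lollipopClique_add_card_inter_lollipopProtected S).symm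
    have hak : (#(S ∩ lollipopClique k) : ℝ) ≤ k := by
      exact_mod_cast card_inter_lollipopClique_le S
    have hedges := two_mul_edgesIn_lollipop_le S
    have hS' : (0 : ℝ) < #S := by exact_mod_cast card_pos.2 hS
    set a := (#(S ∩ lollipopClique k) : ℝ)
    set b := (#(S ∩ lollipopProtected k) : ℝ)
    have hb : b = γ * a := by
      rw [r1, div_eq_div_iff hS'.ne' (by positivity), hcard] at hfair
      linarith
    have ha : 0 ≤ a := by positivity
    rw [rho, div_le_div_iff₀ hS' (by positivity), hcard, hb]
    nlinarith [mul_nonneg (mul_nonneg ha (sub_nonneg.2 hak)) (by positivity : (0 : ℝ) ≤ 1 + γ)]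

end

theorem stmt8_general (k : ℕ) (hn : 9 < k * k)
    (γ : ℕ) (hγ2 : γ ≤ k - 1) :
    rhoStarAlpha (lollipop k) (lollipopProtected k) ((γ : ℝ) / (1 + γ)) =
      ((k : ℝ) - 1 + 2 * γ) / (1 + γ) ∧
    PoF (lollipop k) (lollipopProtected k) ((γ : ℝ) / (1 + γ)) =
      (γ : ℝ) / (1 + γ) * (1 - 2 / ((k : ℝ) - 1)) := by
  have hk : 3 < k := Nat.mul_self_lt_mul_self_iff.1 hn
  have hfair := (isGreatest_rho_lollipop_fair (by omega) hγ2).csSup_eq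
  have hdense := (isGreatest_rho_lollipop hk.le).csSup_eq
  refine ⟨hfair, ?_⟩
  have hk1 : (k : ℝ) - 1 ≠ 0 := by
    have : (3 : ℝ) < k := by exact_mod_cast hk
    linarith
  rw [PoF, rhoStarAlpha, rhoStar, hfair, hdense]
  field_simp
  ring

/-- For a perfect square `n = k² > 9` and an integer `γ` with
`1 ≤ γ ≤ √n - 1`, letting `α_γ = γ/(1+γ)`, the maximum density over subsets of
`L_n` attaining fairness level `α_γ` equals `(√n - 1 + 2γ)/(1 + γ)`, and
consequently `PoF(L_n, α_γ) = α_γ (1 - 2/(√n - 1))`. -/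
theorem stmt8 (k : ℕ) (hk : 2 ≤ k) (hn : 9 < k * k)
    (γ : ℕ) (hγ1 : 1 ≤ γ) (hγ2 : γ ≤ k - 1) :
    rhoStarAlpha (lollipop k) (lollipopProtected k) ((γ : ℝ) / (1 + γ)) =
      ((k : ℝ) - 1 + 2 * γ) / (1 + γ) ∧
    PoF (lollipop k) (lollipopProtected k) ((γ : ℝ) / (1 + γ)) =
      (γ : ℝ) / (1 + γ) * (1 - 2 / ((k : ℝ) - 1)) :=
  stmt8_general k hn γ hγ2
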